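/- Let 0 < α < 1, σ = 1 − α/2, and j ≥ 1. Then (2σ − 1) c_0^{(α,σ)} − σ c_1^{(α,σ)} > 0. -/

import Mathlib

/-!
Write `β = 1 - α`, so that `2σ - 1 = β` and `2σ = β + 1`. The coefficient `b_l` is minus the
trapezoidal-rule error of `t ↦ t ^ β` on `[l - 1 + σ, l + σ]`. Concavity of `t ^ β` gives
`b_l ≥ 0`, and convexity of `t ↦ (t + 1) ^ β - t ^ β`, an average of the convex functions
`t ↦ (t + r) ^ (β - 1)` over `r ∈ [0, 1]`, gives `b_{l+1} ≤ b_l`. Hence `c_1 ≤ a_1` for every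
`j ≥ 1`, and it remains to show `σ a_1 < β (a_0 + b_1)`. Since `2σ = β + 1`, `b_1` has the
closed form `2σ b_1 = (σ + 1) ^ β - 2σ σ ^ β`, and Bernoulli's inequality
`σ (σ + 1) ^ β ≤ (σ + β) σ ^ β` then leaves a margin proportional to `β² (1 - σ) σ ^ β`.
-/

/-- The coefficients `a_l^{(α,σ)}` of the L2-1_σ formula. -/
noncomputable def aCoeff (α σ : ℝ) (l : ℕ) : ℝ :=
  if l = 0 then σ ^ (1 - α)
  else ((l : ℝ) + σ) ^ (1 - α) - ((l : ℝ) - 1 + σ) ^ (1 - α)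

/-- The coefficients `b_l^{(α,σ)}` of the L2-1_σ formula (for `l ≥ 1`). -/
noncomputable def bCoeff (α σ : ℝ) (l : ℕ) : ℝ :=
  (1 / (2 - α)) * (((l : ℝ) + σ) ^ (2 - α) - ((l : ℝ) - 1 + σ) ^ (2 - α)) -
    (1 / 2) * (((l : ℝ) + σ) ^ (1 - α) + ((l : ℝ) - 1 + σ) ^ (1 - α))

/-- The coefficients `c_s^{(α,σ)}` (for `0 ≤ s ≤ j`) of the L2-1_σ formula:
`c_0 = a_0` if `j = 0`; for `j ≥ 1`, `c_0 = a_0 + b_1`,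
`c_s = a_s + b_{s+1} − b_s` for `1 ≤ s ≤ j−1`, and `c_j = a_j − b_j`. -/
noncomputable def cCoeff (α σ : ℝ) (j s : ℕ) : ℝ :=
  if j = 0 then σ ^ (1 - α)
  else if s = 0 then aCoeff α σ 0 + bCoeff α σ 1
  else if s < j then aCoeff α σ s + bCoeff α σ (s + 1) - bCoeff α σ s
  else aCoeff α σ s - bCoeff α σ s

open Real Set intervalIntegral
open MeasureTheory (volume)

theorem convexOn_rpow_of_nonpos {p : ℝ} (hp : p ≤ 0) :
    ConvexOn ℝ (Ioi 0) fun x : ℝ => x ^ p := by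
  have himage : log '' Ioi 0 = univ :=
    eq_univ_of_forall fun y => ⟨exp y, exp_pos y, log_exp y⟩
  have hexp : ConvexOn ℝ (log '' Ioi 0) fun y => exp (p * y) := by
    rw [himage]
    exact convexOn_exp.comp_linearMap (LinearMap.lsmul ℝ ℝ p)
  have hanti : AntitoneOn (fun y => exp (p * y)) (log '' Ioi 0) :=
    fun x _ y _ hxy => exp_le_exp.2 (mul_le_mul_of_nonpos_left hxy hp)
  refine (hexp.comp_concaveOn strictConcaveOn_log_Ioi.concaveOn hanti).congr fun x hx => ?_
  simp [rpow_def_of_pos hx, mul_comm]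

theorem ConvexOn.intervalIntegral_comp_add {g : ℝ → ℝ} {a : ℝ} (hg : ConvexOn ℝ (Ioi a) g)
    (hc : ContinuousOn g (Ioi a)) :
    ConvexOn ℝ (Ioi a) fun t => ∫ r in (0 : ℝ)..1, g (t + r) := by
  have hint : ∀ t ∈ Ioi a, IntervalIntegrable (fun r => g (t + r)) volume 0 1 := fun t ht =>
    (hc.comp (by fun_prop) fun r hr => by simp only [mem_Ioi] at ht ⊢; linarith [hr.1]
      ).intervalIntegrable_of_Icc zero_le_one
  refine ⟨convex_Ioi a, fun x hx y hy μ ν hμ hν hμν => ?_⟩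
  simp only [smul_eq_mul]
  calc ∫ r in (0 : ℝ)..1, g (μ * x + ν * y + r)
      ≤ ∫ r in (0 : ℝ)..1, μ * g (x + r) + ν * g (y + r) := by
        refine integral_mono_on zero_le_one (hint _ ((convex_Ioi a) hx hy hμ hν hμν))
          (((hint x hx).const_mul μ).add ((hint y hy).const_mul ν)) fun r hr => ?_
        have hxr : x + r ∈ Ioi a := by simp only [mem_Ioi] at hx ⊢; linarith [hr.1]
        have hyr : y + r ∈ Ioi a := by simp only [mem_Ioi] at hy ⊢; linarith [hr.1]
        have := hg.2 hxr hyr hμ hν hμν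
        simp only [smul_eq_mul] at this
        rwa [show μ * x + ν * y + r = μ * (x + r) + ν * (y + r) by
          linear_combination r * hμν.symm]
    _ = μ * (∫ r in (0 : ℝ)..1, g (x + r)) + ν * ∫ r in (0 : ℝ)..1, g (y + r) := by
        rw [integral_add ((hint x hx).const_mul μ) ((hint y hy).const_mul ν),
          integral_const_mul, integral_const_mul]

theorem add_one_rpow_sub_rpow_eq_integral {p : ℝ} (hp : 0 < p) (t : ℝ) :
    (t + 1) ^ p - t ^ p = p * ∫ r in (0 : ℝ)..1, (t + r) ^ (p - 1) := by
  rw [integral_comp_add_left (fun x => x ^ (p - 1)), integral_rpow (Or.inl (by linarith)),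
    sub_add_cancel, add_zero]
  field_simp

theorem convexOn_add_one_rpow_sub_rpow {p : ℝ} (hp₀ : 0 < p) (hp₁ : p ≤ 1) :
    ConvexOn ℝ (Ioi 0) fun t : ℝ => (t + 1) ^ p - t ^ p := by
  have hcont : ContinuousOn (fun x : ℝ => x ^ (p - 1)) (Ioi 0) :=
    continuousOn_id.rpow_const fun x hx => Or.inl (ne_of_gt hx)
  have hconv := (convexOn_rpow_of_nonpos (by linarith)).intervalIntegral_comp_add hcont
  refine (hconv.smul hp₀.le).congr fun t _ => ?_
  simp only [smul_eq_mul, add_one_rpow_sub_rpow_eq_integral hp₀]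

theorem ConvexOn.trapezoidal_error_nonneg {f : ℝ → ℝ} {a b : ℝ} (hab : a ≤ b)
    (hf : ConvexOn ℝ (Icc a b) f) (hint : IntervalIntegrable f volume a b) :
    0 ≤ trapezoidal_error f 1 a b := by
  rcases hab.eq_or_lt with rfl | hab
  · simp
  have hba : 0 < b - a := by linarith
  have hchord : ∀ x ∈ Icc a b,
      f x ≤ (b * f a - a * f b) / (b - a) + x * ((f b - f a) / (b - a)) := by
    intro x hx
    have := hf.2 (left_mem_Icc.2 hab.le) (right_mem_Icc.2 hab.le)
      (div_nonneg (sub_nonneg.2 hx.2) hba.le) (div_nonneg (sub_nonneg.2 hx.1) hba.le)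
      (by field_simp; ring)
    simp only [smul_eq_mul] at this
    rw [show (b - x) / (b - a) * a + (x - a) / (b - a) * b = x by field_simp; ring] at this
    exact this.trans_eq (by field_simp; ring)
  have hlin : IntervalIntegrable (fun x => x * ((f b - f a) / (b - a))) volume a b := by
    apply Continuous.intervalIntegrable; fun_prop
  have hmono := integral_mono_on hab.le hint (intervalIntegrable_const.add hlin) hchord
  rw [integral_add intervalIntegrable_const hlin, integral_const, integral_mul_const,
    integral_id, smul_eq_mul] at hmono
  have hchord_integral : (b - a) * ((b * f a - a * f b) / (b - a)) +
      (b ^ 2 - a ^ 2) / 2 * ((f b - f a) / (b - a)) = (b - a) / 2 * (f a + f b) := by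
    field_simp; ring
  rw [trapezoidal_error, trapezoidal_integral_one]
  linarith

theorem ConcaveOn.trapezoidal_error_nonpos {f : ℝ → ℝ} {a b : ℝ} (hab : a ≤ b)
    (hf : ConcaveOn ℝ (Icc a b) f) (hint : IntervalIntegrable f volume a b) :
    trapezoidal_error f 1 a b ≤ 0 := by
  have := hf.neg.trapezoidal_error_nonneg hab hint.neg
  simp only [trapezoidal_error, trapezoidal_integral_one, Pi.neg_apply, integral_neg] at this ⊢
  linarith

theorem trapezoidal_error_add_right_sub {f : ℝ → ℝ} {a b h : ℝ}
    (hab : IntervalIntegrable f volume a b) (hab' : IntervalIntegrable f volume (a + h) (b + h)) :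
    trapezoidal_error f 1 (a + h) (b + h) - trapezoidal_error f 1 a b =
      trapezoidal_error (fun t => f (t + h) - f t) 1 a b := by
  have hshift : IntervalIntegrable (fun t => f (t + h)) volume a b := by
    simpa using hab'.comp_add_right h
  simp only [trapezoidal_error, trapezoidal_integral_one]
  rw [integral_sub hshift hab, integral_comp_add_right]
  ring

theorem mul_add_one_rpow_le_add_mul_rpow {x p : ℝ} (hx : 0 < x) (hp₀ : 0 ≤ p) (hp₁ : p ≤ 1) :
    x * (x + 1) ^ p ≤ (x + p) * x ^ p := by
  have hbernoulli : (1 + x⁻¹) ^ p ≤ 1 + p * x⁻¹ :=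
    rpow_one_add_le_one_add_mul_self (by linarith [inv_pos.2 hx]) hp₀ hp₁
  calc x * (x + 1) ^ p = x * x ^ p * (1 + x⁻¹) ^ p := by
        rw [mul_assoc, ← mul_rpow hx.le (by positivity)]
        field_simp
    _ ≤ x * x ^ p * (1 + p * x⁻¹) := by gcongr
    _ = (x + p) * x ^ p := by field_simp

theorem bCoeff_eq_neg_trapezoidal_error {α : ℝ} (hα : α < 2) (σ : ℝ) (l : ℕ) :
    bCoeff α σ l =
      -trapezoidal_error (fun t => t ^ (1 - α)) 1 ((l : ℝ) - 1 + σ) ((l : ℝ) - 1 + σ + 1) := by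
  rw [bCoeff, trapezoidal_error, trapezoidal_integral_one, integral_rpow (Or.inl (by linarith)),
    show (1 - α + 1) = 2 - α by ring, show (l : ℝ) - 1 + σ + 1 = l + σ by ring]
  ring

theorem bCoeff_nonneg {α σ : ℝ} {l : ℕ} (hα₀ : 0 ≤ α) (hα₁ : α ≤ 1) (hl : 0 ≤ (l : ℝ) - 1 + σ) :
    0 ≤ bCoeff α σ l := by
  rw [bCoeff_eq_neg_trapezoidal_error (by linarith), neg_nonneg]
  refine ConcaveOn.trapezoidal_error_nonpos (by linarith) ?_
    ((continuous_rpow_const (by linarith)).intervalIntegrable _ _)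
  exact (concaveOn_rpow (by linarith) (by linarith)).subset
    (fun t ht => le_trans hl ht.1) (convex_Icc _ _)

theorem bCoeff_succ_le {α σ : ℝ} {l : ℕ} (hα₀ : 0 ≤ α) (hα₁ : α < 1) (hl : 0 < (l : ℝ) - 1 + σ) :
    bCoeff α σ (l + 1) ≤ bCoeff α σ l := by
  set u : ℝ := (l : ℝ) - 1 + σ
  have hcont : Continuous fun t : ℝ => t ^ (1 - α) := continuous_rpow_const (by linarith)
  have hshift := trapezoidal_error_add_right_sub (a := u) (b := u + 1) (h := 1)
    (hcont.intervalIntegrable _ _) (hcont.intervalIntegrable _ _)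
  have hconv : ConvexOn ℝ (Icc u (u + 1)) fun t : ℝ => (t + 1) ^ (1 - α) - t ^ (1 - α) :=
    (convexOn_add_one_rpow_sub_rpow (by linarith) (by linarith)).subset
      (fun t ht => lt_of_lt_of_le hl ht.1) (convex_Icc _ _)
  have hnonneg := hconv.trapezoidal_error_nonneg (by linarith)
    (by apply Continuous.intervalIntegrable; fun_prop)
  rw [bCoeff_eq_neg_trapezoidal_error (by linarith), bCoeff_eq_neg_trapezoidal_error (by linarith),
    show ((l + 1 : ℕ) : ℝ) - 1 + σ = u + 1 by push_cast; ring]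
  linarith

theorem cCoeff_one_le_aCoeff_one {α σ : ℝ} {j : ℕ} (hα₀ : 0 ≤ α) (hα₁ : α < 1) (hσ : 0 < σ)
    (hj : 1 ≤ j) : cCoeff α σ j 1 ≤ aCoeff α σ 1 := by
  rcases hj.eq_or_lt with rfl | hj
  · have := bCoeff_nonneg (σ := σ) (l := 1) hα₀ hα₁.le (by norm_num; linarith)
    simp only [cCoeff, one_ne_zero, lt_self_iff_false, if_false]
    linarith
  · have := bCoeff_succ_le (σ := σ) (l := 1) hα₀ hα₁ (by norm_num; linarith)
    simp only [cCoeff, show j ≠ 0 by omega, one_ne_zero, hj, if_false, if_true]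
    linarith

theorem two_mul_mul_bCoeff_one {α σ : ℝ} (hσ : σ = 1 - α / 2) (hσ₀ : 0 < σ) :
    2 * σ * bCoeff α σ 1 = (σ + 1) ^ (1 - α) - 2 * σ * σ ^ (1 - α) := by
  have hσ₁ : 0 < σ + 1 := by linarith
  have h2α : 2 - α = 1 - α + 1 := by ring
  rw [bCoeff, Nat.cast_one, sub_self, zero_add, add_comm 1 σ, h2α, rpow_add_one hσ₀.ne',
    rpow_add_one hσ₁.ne', show 1 - α + 1 = 2 * σ by rw [hσ]; ring]
  field_simp
  ring

theorem mul_aCoeff_one_lt {α σ : ℝ} (hα₀ : 0 < α) (hα₁ : α < 1) (hσ : σ = 1 - α / 2) :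
    σ * aCoeff α σ 1 < (2 * σ - 1) * (aCoeff α σ 0 + bCoeff α σ 1) := by
  have hσ₀ : 0 < σ := by linarith
  set X := σ ^ (1 - α)
  set Y := (σ + 1) ^ (1 - α)
  have hX : 0 < X := rpow_pos_of_pos hσ₀ _
  have ha₀ : aCoeff α σ 0 = X := by simp [aCoeff, X]
  have ha₁ : aCoeff α σ 1 = Y - X := by
    simp only [aCoeff, one_ne_zero, if_false, Nat.cast_one, sub_self, zero_add, add_comm 1 σ, Y, X]
  have hb := two_mul_mul_bCoeff_one hσ hσ₀
  have hbernoulli : σ * Y ≤ (3 * σ - 1) * X := by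
    have := mul_add_one_rpow_le_add_mul_rpow hσ₀ (p := 1 - α) (by linarith) (by linarith)
    rwa [show σ + (1 - α) = 3 * σ - 1 by rw [hσ]; ring] at this
  have hweight : 0 ≤ 2 * σ ^ 2 - 2 * σ + 1 := by nlinarith [sq_nonneg (2 * σ - 1)]
  have hgap : 0 < X * (1 - σ) * (2 * σ - 1) ^ 2 :=
    mul_pos (mul_pos hX (by linarith)) (pow_pos (by linarith) 2)
  rw [ha₀, ha₁]
  refine lt_of_mul_lt_mul_left (a := 2 * σ ^ 2) ?_ (by positivity)
  linear_combination hgap + mul_le_mul_of_nonneg_left hbernoulli hweight - σ * (2 * σ - 1) * hb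

/-- Lemma 4, inequality (4.104) (Alikhanov, L2-1_σ paper): for `0 < α < 1`, `σ = 1 − α/2`
and `j ≥ 1`, one has `(2σ − 1) c_0^{(α,σ)} − σ c_1^{(α,σ)} > 0`. -/
theorem c_coeff_sigma_inequality (α σ : ℝ) (hα0 : 0 < α) (hα1 : α < 1)
    (hσ : σ = 1 - α / 2) (j : ℕ) (hj : 1 ≤ j) :
    (2 * σ - 1) * cCoeff α σ j 0 - σ * cCoeff α σ j 1 > 0 := by
  have hσ₀ : 0 < σ := by linarith
  have hc₀ : cCoeff α σ j 0 = aCoeff α σ 0 + bCoeff α σ 1 := by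
    simp only [cCoeff, show j ≠ 0 by omega, if_true, if_false]
  have hc₁ := mul_le_mul_of_nonneg_left (cCoeff_one_le_aCoeff_one hα0.le hα1 hσ₀ hj) hσ₀.le
  rw [hc₀]
  linarith [mul_aCoeff_one_lt hα0 hα1 hσ]
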